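/- arXiv:2304.06376 — 2 statements merged into one kernel-verified Lean document; each statement's English description precedes it below -/
import Mathlib

section
/- Let f : ℝ² → ℝ satisfy |f| ≤ a_m and f(x,y) = 0 whenever x² + y² > r0². Then for every ν1 > 0, the 2π-periodic function θ ↦ g_{ν1}(θ) = FT_f(ν1 cos θ, ν1 sin θ) is quasi-bandlimited with parameters k1 = 2π·ν1·r0 / 0.765 and γ = 0.765; that is, there exists d ≥ 0 such that its k-th Fourier series coefficient c_k satisfies |c_k| ≤ d·e^{−0.765·|k|} for all integers k with |k| ≥ 2π·ν1·r0 / 0.765. -/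
/-!
For real `θ`, `g(θ) = ∫ f(p) e^{-2πiν(x cos θ + y sin θ)} dp`, so after Fubini
`c_k = (2π)⁻¹ ∫ f(p) (∫₀^{2π} e^{-2πiν(x cos θ + y sin θ)} e^{-ikθ} dθ) dp`.
For fixed `p` the inner integrand is an entire `2π`-periodic function of `θ`, so by Cauchy's
theorem the inner integral may be taken along the line `Im θ = -γ sign k` instead. There
`|e^{-ikθ}| = e^{-γ|k|}` while the kernel is at most `exp(2πν(|x| + |y|) e^γ)`, which gives
`|c_k| ≤ ‖f‖₁ exp(4πν r0 e^γ) e^{-γ|k|}` for every `γ ≥ 0`.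
-/

open MeasureTheory ProbabilityTheory Finset

noncomputable section

/-- The 2D Fourier transform `FT_f(u,v) = ∬ f(x,y) e^{-2πj(ux+vy)} dx dy`. -/
def FT2 (f : ℝ × ℝ → ℝ) (u v : ℝ) : ℂ :=
  ∫ p : ℝ × ℝ, (f p : ℂ) *
    Complex.exp (-(2 * (Real.pi : ℂ) * Complex.I) * ((u * p.1 + v * p.2 : ℝ) : ℂ))

open Complex

theorem Complex.norm_exp_mul_I_le_exp_abs_im (z : ℂ) : ‖cexp (z * I)‖ ≤ Real.exp |z.im| := by
  rw [norm_exp]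
  gcongr
  simpa using neg_le_abs z.im

theorem Complex.norm_cos_le_exp_abs_im (z : ℂ) : ‖cos z‖ ≤ Real.exp |z.im| := by
  have h := norm_exp_mul_I_le_exp_abs_im z
  have h' := norm_exp_mul_I_le_exp_abs_im (-z)
  rw [neg_im, abs_neg] at h'
  calc ‖cos z‖ ≤ (‖cexp (z * I)‖ + ‖cexp (-z * I)‖) / 2 := by
        rw [cos, norm_div, RCLike.norm_ofNat]; gcongr; exact norm_add_le _ _
    _ ≤ Real.exp |z.im| := by linarith

theorem Complex.norm_sin_le_exp_abs_im (z : ℂ) : ‖sin z‖ ≤ Real.exp |z.im| := by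
  have h := norm_exp_mul_I_le_exp_abs_im z
  have h' := norm_exp_mul_I_le_exp_abs_im (-z)
  rw [neg_im, abs_neg] at h'
  calc ‖sin z‖ ≤ (‖cexp (-z * I)‖ + ‖cexp (z * I)‖) / 2 := by
        rw [sin, norm_div, norm_mul, norm_I, mul_one, RCLike.norm_ofNat]
        gcongr; exact norm_sub_le _ _
    _ ≤ Real.exp |z.im| := by linarith

theorem abs_le_abs_of_sq_add_sq_le {x y r : ℝ} (h : x ^ 2 + y ^ 2 ≤ r ^ 2) :
    |x| ≤ |r| ∧ |y| ≤ |r| :=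
  ⟨sq_le_sq.1 (by nlinarith [sq_nonneg y]), sq_le_sq.1 (by nlinarith [sq_nonneg x])⟩

theorem Bornology.IsBounded.integrable_of_norm_le {X E : Type*} [MeasurableSpace X]
    [PseudoMetricSpace X] [ProperSpace X] {μ : Measure X} [IsFiniteMeasureOnCompacts μ]
    [NormedAddCommGroup E] {s : Set X} (hs : Bornology.IsBounded s) {f : X → E}
    (hf : AEStronglyMeasurable f μ) {C : ℝ} (hC : ∀ x, ‖f x‖ ≤ C) (hsupp : ∀ x ∉ s, f x = 0) :
    Integrable f μ :=
  (IntegrableOn.of_bound hs.measure_lt_top hf.restrict C (ae_of_all _ hC))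
    |>.integrable_of_forall_notMem_eq_zero hsupp

theorem Function.Periodic.intervalIntegral_add_mul_I {E : Type*} [NormedAddCommGroup E]
    [NormedSpace ℂ E] {F : ℂ → E} {T : ℝ}
    (hper : Function.Periodic F T) (hF : Differentiable ℂ F) (c : ℝ) :
    ∫ x in (0:ℝ)..T, F (x + c * I) = ∫ x in (0:ℝ)..T, F x := by
  have hrect := integral_boundary_rect_eq_zero_of_differentiableOn F 0 (T + c * I)
    hF.differentiableOn
  have hside (y : ℝ) : F (T + y * I) = F (y * I) := by simpa [add_comm] using hper (y * I)
  simp only [zero_re, zero_im, add_re, add_im, ofReal_re, ofReal_im, mul_re, mul_im,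
    I_re, I_im, ofReal_zero, zero_mul, add_zero, mul_zero, mul_one, sub_self, zero_add,
    hside] at hrect
  exact (sub_eq_zero.1 (by simpa using hrect)).symm

theorem Function.Periodic.norm_intervalIntegral_mul_cexp_le {F : ℂ → ℂ}
    (hper : Function.Periodic F (2 * Real.pi)) (hF : Differentiable ℂ F) {γ M : ℝ} (hγ : 0 ≤ γ)
    (hM : ∀ z : ℂ, |z.im| ≤ γ → ‖F z‖ ≤ M) (k : ℤ) :
    ‖∫ θ in (0:ℝ)..(2 * Real.pi), F θ * cexp (-(I * k * θ))‖
      ≤ 2 * Real.pi * M * Real.exp (-γ * |(k : ℝ)|) := by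
  set G : ℂ → ℂ := fun z => F z * cexp (-(I * k * z))
  have hGper : Function.Periodic G ((2 * Real.pi : ℝ) : ℂ) := fun z => by
    push_cast
    simp only [G, hper z]
    rw [show -(I * k * (z + 2 * Real.pi)) = -(I * k * z) + (-k : ℤ) * (2 * Real.pi * I) by
      push_cast; ring, exp_add, exp_int_mul_two_pi_mul_I, mul_one]
  have hG : Differentiable ℂ G := hF.mul (by fun_prop)
  -- on the line `Im z = c` we have `|e^{-ikz}| = e^{kc} = e^{-γ|k|}`
  set c : ℝ := -(Int.sign k * γ)
  have hc : |c| ≤ γ := by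
    rw [abs_neg, abs_mul, abs_of_nonneg hγ]
    refine mul_le_of_le_one_left hγ ?_
    rcases Int.sign_trichotomy k with h | h | h <;> simp [h]
  have hkc : (k : ℝ) * c = -γ * |(k : ℝ)| := by
    rw [← Int.cast_abs, ← Int.sign_mul_self_eq_abs]; push_cast; ring
  rw [← hGper.intervalIntegral_add_mul_I hG c]
  have hbound (θ : ℝ) : ‖G (θ + c * I)‖ ≤ M * Real.exp (-γ * |(k : ℝ)|) := by
    have hFθ := hM (θ + c * I) (by simpa using hc)
    simp only [G, norm_mul, norm_exp]
    gcongr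
    · exact (norm_nonneg _).trans hFθ
    · simp [← hkc]
  calc _ ≤ M * Real.exp (-γ * |(k : ℝ)|) * |2 * Real.pi - 0| :=
        intervalIntegral.norm_integral_le_of_norm_le_const fun θ _ => hbound θ
    _ = _ := by rw [sub_zero, abs_of_pos Real.two_pi_pos]; ring

def ringKernel (ν : ℝ) (p : ℝ × ℝ) (z : ℂ) : ℂ :=
  cexp (-(2 * Real.pi * I) * ν * (p.1 * cos z + p.2 * sin z))

theorem ringKernel_periodic (ν : ℝ) (p : ℝ × ℝ) :
    Function.Periodic (ringKernel ν p) (2 * Real.pi) := fun z => by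
  simp only [ringKernel, cos_add_two_pi, sin_add_two_pi]

theorem differentiable_ringKernel (ν : ℝ) (p : ℝ × ℝ) : Differentiable ℂ (ringKernel ν p) := by
  unfold ringKernel; fun_prop

theorem norm_ringKernel_le (ν : ℝ) (p : ℝ × ℝ) (z : ℂ) :
    ‖ringKernel ν p z‖ ≤ Real.exp (2 * Real.pi * |ν| * (|p.1| + |p.2|) * Real.exp |z.im|) := by
  refine (norm_exp_le_exp_norm _).trans (Real.exp_le_exp.2 ?_)
  have h2π : ‖-(2 * Real.pi * I) * ν‖ = 2 * Real.pi * |ν| := by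
    simp [abs_of_pos Real.pi_pos]
  calc _ = 2 * Real.pi * |ν| * ‖p.1 * cos z + p.2 * sin z‖ := by rw [norm_mul, h2π]
    _ ≤ 2 * Real.pi * |ν| * (|p.1| * Real.exp |z.im| + |p.2| * Real.exp |z.im|) := by
      gcongr
      refine (norm_add_le _ _).trans ?_
      simp only [norm_mul, norm_real, Real.norm_eq_abs]
      gcongr
      exacts [norm_cos_le_exp_abs_im z, norm_sin_le_exp_abs_im z]
    _ = _ := by ring

theorem FT2_ring_eq (f : ℝ × ℝ → ℝ) (ν θ : ℝ) :
    FT2 f (ν * Real.cos θ) (ν * Real.sin θ) = ∫ p, (f p : ℂ) * ringKernel ν p θ := by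
  unfold FT2 ringKernel
  congr 1 with p
  push_cast
  ring_nf

theorem norm_ringKernel_ofReal (ν : ℝ) (p : ℝ × ℝ) (θ : ℝ) : ‖ringKernel ν p θ‖ = 1 := by
  simp [ringKernel, norm_exp, ← ofReal_cos, ← ofReal_sin]

theorem intervalIntegral_FT2_ring_mul_cexp {f : ℝ × ℝ → ℝ} (hf : Integrable f) (ν : ℝ) (k : ℤ) :
    ∫ θ in (0:ℝ)..(2 * Real.pi), FT2 f (ν * Real.cos θ) (ν * Real.sin θ) * cexp (-(I * k * θ))
      = ∫ p, (f p : ℂ) * ∫ θ in (0:ℝ)..(2 * Real.pi), ringKernel ν p θ * cexp (-(I * k * θ)) := by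
  rw [intervalIntegral.integral_of_le Real.two_pi_pos.le]
  calc _ = ∫ θ in Set.Ioc 0 (2 * Real.pi), ∫ p,
          (f p : ℂ) * (ringKernel ν p θ * cexp (-(I * k * θ))) := by
        refine setIntegral_congr_fun measurableSet_Ioc fun θ _ => ?_
        rw [FT2_ring_eq, ← integral_mul_const]
        simp only [mul_assoc]
    _ = ∫ p, ∫ θ in Set.Ioc 0 (2 * Real.pi),
          (f p : ℂ) * (ringKernel ν p θ * cexp (-(I * k * θ))) := by
        have : IsFiniteMeasure (volume.restrict (Set.Ioc (0 : ℝ) (2 * Real.pi))) :=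
          isFiniteMeasure_restrict.2 measure_Ioc_lt_top.ne
        have h := (hf.ofReal (𝕜 := ℂ)).comp_snd (volume.restrict (Set.Ioc (0 : ℝ) (2 * Real.pi)))
        refine integral_integral_swap (h.mul_bdd (c := 1) ?_ ?_)
        · exact (by unfold ringKernel; fun_prop : Continuous _).aestronglyMeasurable
        · exact ae_of_all _ fun x => by simp [norm_ringKernel_ofReal, norm_exp]
    _ = _ := by
        simp only [integral_const_mul, intervalIntegral.integral_of_le Real.two_pi_pos.le]

theorem norm_intervalIntegral_ringKernel_mul_cexp_le (ν : ℝ) (p : ℝ × ℝ) {γ : ℝ} (hγ : 0 ≤ γ)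
    (k : ℤ) :
    ‖∫ θ in (0:ℝ)..(2 * Real.pi), ringKernel ν p θ * cexp (-(I * k * θ))‖
      ≤ 2 * Real.pi * Real.exp (2 * Real.pi * |ν| * (|p.1| + |p.2|) * Real.exp γ)
        * Real.exp (-γ * |(k : ℝ)|) :=
  (ringKernel_periodic ν p).norm_intervalIntegral_mul_cexp_le (differentiable_ringKernel ν p) hγ
    (fun z hz => (norm_ringKernel_le ν p z).trans (by gcongr)) k

theorem norm_intervalIntegral_FT2_ring_mul_cexp_le {f : ℝ × ℝ → ℝ} {r : ℝ} (hf : Integrable f)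
    (hsupp : ∀ p : ℝ × ℝ, r ^ 2 < p.1 ^ 2 + p.2 ^ 2 → f p = 0) (ν : ℝ) {γ : ℝ} (hγ : 0 ≤ γ)
    (k : ℤ) :
    ‖∫ θ in (0:ℝ)..(2 * Real.pi), FT2 f (ν * Real.cos θ) (ν * Real.sin θ) * cexp (-(I * k * θ))‖
      ≤ (∫ p, ‖f p‖) * (2 * Real.pi * Real.exp (2 * Real.pi * |ν| * (2 * |r|) * Real.exp γ)
        * Real.exp (-γ * |(k : ℝ)|)) := by
  rw [intervalIntegral_FT2_ring_mul_cexp hf, ← integral_mul_const]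
  refine norm_integral_le_of_norm_le (hf.norm.mul_const _) (ae_of_all _ fun p => ?_)
  rcases eq_or_ne (f p) 0 with hp | hp
  · simp [hp]
  obtain ⟨h₁, h₂⟩ := abs_le_abs_of_sq_add_sq_le (not_lt.1 (mt (hsupp p) hp))
  rw [norm_mul, norm_real]
  gcongr
  refine (norm_intervalIntegral_ringKernel_mul_cexp_le ν p hγ k).trans ?_
  gcongr
  linarith

theorem fourier_ring_is_qbl_general (a_m r0 : ℝ) (f : ℝ × ℝ → ℝ)
    (hf : Measurable f) (hbd : ∀ p, |f p| ≤ a_m)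
    (hsupp : ∀ p : ℝ × ℝ, r0 ^ 2 < p.1 ^ 2 + p.2 ^ 2 → f p = 0)
    (ν1 : ℝ) :
    ∃ d : ℝ, 0 ≤ d ∧ ∀ k : ℤ, 2 * Real.pi * ν1 * r0 / 0.765 ≤ (|k| : ℤ) →
      ‖((2 * Real.pi : ℝ) : ℂ)⁻¹ * ∫ θ in (0:ℝ)..(2 * Real.pi),
          FT2 f (ν1 * Real.cos θ) (ν1 * Real.sin θ) *
            Complex.exp (-(Complex.I * (k : ℂ) * (θ : ℂ)))‖
        ≤ d * Real.exp (-(0.765) * (|k| : ℤ)) := by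
  have hfi : Integrable f :=
    (Metric.isBounded_closedBall (x := 0) (r := |r0|)).integrable_of_norm_le
      hf.aestronglyMeasurable (fun p => (hbd p : ‖f p‖ ≤ a_m)) fun p hp => by_contra fun h =>
        hp (by simpa [Prod.norm_def] using abs_le_abs_of_sq_add_sq_le (not_lt.1 (mt (hsupp p) h)))
  refine ⟨(∫ p, ‖f p‖) * Real.exp (2 * Real.pi * |ν1| * (2 * |r0|) * Real.exp 0.765),
    mul_nonneg (integral_nonneg fun _ => norm_nonneg _) (Real.exp_pos _).le, fun k _ => ?_⟩
  rw [norm_mul, norm_inv, norm_real, Real.norm_of_nonneg Real.two_pi_pos.le, Int.cast_abs]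
  calc _ ≤ (2 * Real.pi)⁻¹ * ((∫ p, ‖f p‖) * (2 * Real.pi
          * Real.exp (2 * Real.pi * |ν1| * (2 * |r0|) * Real.exp 0.765)
          * Real.exp (-0.765 * |(k : ℝ)|))) := by
        gcongr
        exact norm_intervalIntegral_FT2_ring_mul_cexp_le hfi hsupp ν1 (by norm_num) k
    _ = _ := by field_simp

/-- If `|f| ≤ a_m` and `f` vanishes outside the disc of radius `r0`,
then for every `ν1 > 0` the ring `θ ↦ FT_f(ν1 cos θ, ν1 sin θ)` is quasi-bandlimited
with parameters `k1 = 2π ν1 r0 / 0.765`, `γ = 0.765`: its Fourier series coefficients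
`c k` satisfy `‖c k‖ ≤ d e^{-0.765 |k|}` for all `|k| ≥ 2π ν1 r0 / 0.765`. -/
theorem fourier_ring_is_qbl (a_m r0 : ℝ) (f : ℝ × ℝ → ℝ)
    (hf : Measurable f) (hbd : ∀ p, |f p| ≤ a_m)
    (hsupp : ∀ p : ℝ × ℝ, r0 ^ 2 < p.1 ^ 2 + p.2 ^ 2 → f p = 0)
    (ν1 : ℝ) (hν1 : 0 < ν1) :
    ∃ d : ℝ, 0 ≤ d ∧ ∀ k : ℤ, 2 * Real.pi * ν1 * r0 / 0.765 ≤ (|k| : ℤ) →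
      ‖((2 * Real.pi : ℝ) : ℂ)⁻¹ * ∫ θ in (0:ℝ)..(2 * Real.pi),
          FT2 f (ν1 * Real.cos θ) (ν1 * Real.sin θ) *
            Complex.exp (-(Complex.I * (k : ℂ) * (θ : ℂ)))‖
        ≤ d * Real.exp (-(0.765) * (|k| : ℤ)) :=
  fourier_ring_is_qbl_general a_m r0 f hf hbd hsupp ν1
end
end

section
/- Let p : ℝ → ℂ be 1-periodic and differentiable with ‖p'‖_∞ ≤ L. Then there is an absolute constant C such that for every N and every i ∈ {1, …, N}, the i-th order statistic t_i of N i.i.d. Uniform(0,1) samples satisfies E[ |p(t_i) − p(i/N)|² ] ≤ L² · ( 1/(4N) + C/(N√N) ). -/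
open MeasureTheory ProbabilityTheory Finset

noncomputable section

/-- `t` is the vector of order statistics of `N` i.i.d. samples from the uniform
distribution on the interval `[0, b]`: there exist i.i.d. random variables `u i`,
each uniformly distributed on `[0, b]`, such that for every `ω` the vector
`(t i ω)_i` is the monotone rearrangement of `(u i ω)_i`. -/
def IsUniformOrderStats {Ω : Type*} [MeasurableSpace Ω] (μ : Measure Ω) (b : ℝ)
    {N : ℕ} (t : Fin N → Ω → ℝ) : Prop :=
  ∃ u : Fin N → Ω → ℝ,
    (∀ i, Measurable (u i)) ∧
    iIndepFun u μ ∧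
    (∀ i, Measure.map (u i) μ = (ENNReal.ofReal b)⁻¹ • volume.restrict (Set.Icc 0 b)) ∧
    ∀ ω, Monotone (fun i => t i ω) ∧ ∃ σ : Equiv.Perm (Fin N), ∀ i, t i ω = u (σ i) ω

/-!
The order statistic `t i` exceeds `x` exactly when at most `i` of the samples fall in `[0, x]`,
so its tail `P(x < t i)` is a sum of binomial probabilities. Integrating it against `1` and `2x`
with the beta integrals `∫₀¹ xʲ (1 - x)ⁿ = j! n! / (j + n + 1)!` gives
`E (t i) = (i + 1) / (N + 1)` and `E (t i)² = (i + 1)(i + 2) / ((N + 1)(N + 2))`.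
The mean value inequality bounds `E ‖p (t i) - p c‖²` by `L² E (t i - c)²`, and for
`c = (i + 1) / N` the latter is the variance of `t i`, at most `1 / (4N)`, plus the squared bias
`((i + 1) / (N + 1) - c)² ≤ 1 / N²`; so `C = 1` works.
-/

open scoped ENNReal Nat

theorem integral_pow_mul_one_sub_pow (j n : ℕ) :
    ∫ x in (0:ℝ)..1, x ^ j * (1 - x) ^ n = (j ! * n ! : ℝ) / (j + n + 1)! := by
  induction n generalizing j with
  | zero =>
    simp only [pow_zero, mul_one, integral_pow, Nat.factorial_zero, add_zero, Nat.factorial_succ]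
    push_cast
    field_simp
    simp
  | succ n ih =>
    have hsplit : ∀ x : ℝ, x ^ j * (1 - x) ^ (n + 1)
        = x ^ j * (1 - x) ^ n - x ^ (j + 1) * (1 - x) ^ n := fun x => by ring
    simp_rw [hsplit]
    rw [intervalIntegral.integral_sub (by apply Continuous.intervalIntegrable; fun_prop)
      (by apply Continuous.intervalIntegrable; fun_prop), ih, ih,
      show j + 1 + n + 1 = j + n + 1 + 1 by ring, show j + (n + 1) + 1 = j + n + 1 + 1 by ring]
    push_cast [Nat.factorial_succ]
    field_simp
    ring

theorem integral_choose_mul_pow_mul_one_sub_pow {N m : ℕ} (hm : m ≤ N) :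
    ∫ x in (0:ℝ)..1, N.choose m * x ^ m * (1 - x) ^ (N - m) = 1 / (N + 1) := by
  simp_rw [mul_assoc]
  rw [intervalIntegral.integral_const_mul, integral_pow_mul_one_sub_pow,
    Nat.add_sub_of_le hm, Nat.choose_eq_factorial_div_factorial hm,
    Nat.cast_div (Nat.factorial_mul_factorial_dvd_factorial hm) (by positivity),
    Nat.factorial_succ]
  push_cast
  field_simp

theorem mul_choose_mul_pow_mul_one_sub_pow (N m : ℕ) (x : ℝ) :
    x * (N.choose m * x ^ m * (1 - x) ^ (N - m)) = (m + 1) / (N + 1) *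
      ((N + 1).choose (m + 1) * x ^ (m + 1) * (1 - x) ^ (N + 1 - (m + 1))) := by
  have h : ((N : ℝ) + 1) * N.choose m = (N + 1).choose (m + 1) * (m + 1) := by
    exact_mod_cast Nat.add_one_mul_choose_eq N m
  rw [Nat.add_sub_add_right]
  field_simp
  linear_combination x ^ (m + 1) * (1 - x) ^ (N - m) * h

theorem integral_pow_succ_eq_intervalIntegral_measureReal_lt {Ω : Type*} [MeasurableSpace Ω]
    {μ : Measure Ω} [IsFiniteMeasure μ] {X : Ω → ℝ} (hX : Measurable X)
    (h01 : ∀ᵐ ω ∂μ, X ω ∈ Set.Icc 0 1) (n : ℕ) :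
    ∫ ω, X ω ^ (n + 1) ∂μ = ∫ x in (0:ℝ)..1, (n + 1) * x ^ n * μ.real {ω | x < X ω} := by
  have hX0 : 0 ≤ᵐ[μ] X := h01.mono fun _ h => h.1
  have hprimitive : ∀ y : ℝ, ∫ x in (0:ℝ)..y, (n + 1) * x ^ n = y ^ (n + 1) := fun y => by
    rw [intervalIntegral.integral_const_mul, integral_pow]
    field_simp
    ring
  have hlayer := lintegral_comp_eq_lintegral_meas_lt_mul μ hX0 hX.aemeasurable
    (g := fun x => (n + 1) * x ^ n) (fun _ _ => by apply Continuous.intervalIntegrable; fun_prop)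
    (by
      filter_upwards [ae_restrict_mem measurableSet_Ioi] with x hx
      exact mul_nonneg (by positivity) (pow_nonneg (le_of_lt hx) n))
  have htail : ∀ x ∈ Set.Ioi (1:ℝ), μ {ω | x < X ω} = 0 := fun x hx =>
    measure_mono_null (fun ω (hω : x < X ω) (h : X ω ∈ Set.Icc 0 1) =>
      (h.2.trans_lt hx).not_gt hω) (ae_iff.1 h01)
  simp only [hprimitive] at hlayer
  rw [← Set.Ioc_union_Ioi_eq_Ioi zero_le_one, lintegral_union measurableSet_Ioi
    (Set.Ioc_disjoint_Ioi le_rfl), setLIntegral_congr_fun measurableSet_Ioi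
    fun x hx => by rw [htail x hx, zero_mul], lintegral_zero, add_zero] at hlayer
  have hmeas : Measurable fun x : ℝ => μ.real {ω | x < X ω} :=
    Antitone.measurable fun x y hxy => measureReal_mono fun ω hω => lt_of_le_of_lt hxy hω
  rw [integral_eq_lintegral_of_nonneg_ae (hX0.mono fun ω h => pow_nonneg h _)
      (hX.pow_const _).aestronglyMeasurable,
    intervalIntegral.integral_of_le zero_le_one,
    integral_eq_lintegral_of_nonneg_ae (by
        filter_upwards [ae_restrict_mem measurableSet_Ioc] with x hx
        exact mul_nonneg (mul_nonneg (by positivity) (pow_nonneg hx.1.le n)) measureReal_nonneg)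
      (by fun_prop), hlayer]
  refine congrArg ENNReal.toReal (setLIntegral_congr_fun measurableSet_Ioc fun x hx => ?_)
  rw [ENNReal.ofReal_mul (mul_nonneg (by positivity) (pow_nonneg hx.1.le n)),
    ofReal_measureReal, mul_comm]

theorem integral_sub_const_sq {Ω : Type*} [MeasurableSpace Ω] {μ : Measure Ω}
    [IsProbabilityMeasure μ] {X : Ω → ℝ} (hX : MemLp X 2 μ) (c : ℝ) :
    ∫ ω, (X ω - c) ^ 2 ∂μ = ∫ ω, X ω ^ 2 ∂μ - 2 * c * ∫ ω, X ω ∂μ + c ^ 2 := by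
  have hX2 := hX.integrable_sq
  have hlin : Integrable (fun ω => 2 * X ω * c) μ :=
    ((hX.integrable one_le_two).const_mul 2).mul_const c
  have hquad : Integrable (fun ω => X ω ^ 2 - 2 * X ω * c) μ := hX2.sub hlin
  simp_rw [sub_sq]
  rw [integral_add hquad (integrable_const _), integral_sub hX2 hlin, integral_mul_const,
    integral_const_mul, integral_const]
  simp only [probReal_univ, one_smul]
  ring

theorem integral_norm_sub_sq_le_of_norm_deriv_le {Ω E : Type*} [MeasurableSpace Ω]
    {μ : Measure Ω} [NormedAddCommGroup E] [NormedSpace ℝ E] {p : ℝ → E} {L : ℝ}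
    (hp : Differentiable ℝ p) (hL : ∀ x, ‖deriv p x‖ ≤ L) {X : Ω → ℝ} {c : ℝ}
    (hX : Integrable (fun ω => (X ω - c) ^ 2) μ) :
    ∫ ω, ‖p (X ω) - p c‖ ^ 2 ∂μ ≤ L ^ 2 * ∫ ω, (X ω - c) ^ 2 ∂μ := by
  rw [← integral_const_mul]
  refine integral_mono_of_nonneg (ae_of_all _ fun _ => by positivity) (hX.const_mul _)
    (ae_of_all _ fun ω => ?_)
  have hlip : ‖p (X ω) - p c‖ ≤ L * |X ω - c| := by
    simpa [Real.norm_eq_abs] using Convex.norm_image_sub_le_of_norm_deriv_le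
      (fun z _ => hp z) (fun z _ => hL z) convex_univ (Set.mem_univ c) (Set.mem_univ (X ω))
  calc ‖p (X ω) - p c‖ ^ 2 ≤ (L * |X ω - c|) ^ 2 := pow_le_pow_left₀ (norm_nonneg _) hlip 2
    _ = L ^ 2 * (X ω - c) ^ 2 := by rw [mul_pow, sq_abs]

section CountingSamples

variable {Ω ι β : Type*} [Fintype ι]

theorem setOf_filter_mem_eq_iInter [DecidableEq ι] (u : ι → Ω → β) (S : Set β)
    [DecidablePred (· ∈ S)] (A : Finset ι) :
    {ω | ({j | u j ω ∈ S} : Finset ι) = A} = ⋂ j, u j ⁻¹' (if j ∈ A then S else Sᶜ) := by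
  ext ω
  simp only [Finset.ext_iff, Finset.mem_filter, Finset.mem_univ, true_and,
    Set.mem_iInter, Set.mem_preimage]
  refine forall_congr' fun j => ?_
  split_ifs with hj <;> simp [hj]

variable [MeasurableSpace Ω] [MeasurableSpace β] {μ : Measure Ω} {u : ι → Ω → β} {S : Set β}
  [DecidablePred (· ∈ S)]

theorem measurable_card_filter_mem (hu : ∀ j, Measurable (u j)) (hS : MeasurableSet S) :
    Measurable fun ω => #({j | u j ω ∈ S} : Finset ι) := by
  simp_rw [Finset.card_filter]
  exact Finset.measurable_sum _ fun j _ =>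
    Measurable.ite (hu j hS) measurable_const measurable_const

variable [DecidableEq ι] [IsProbabilityMeasure μ]

theorem ProbabilityTheory.iIndepFun.measure_filter_mem_eq (hu : ∀ j, Measurable (u j))
    (hind : iIndepFun u μ) (hS : MeasurableSet S) {q : ℝ≥0∞} (hq : ∀ j, μ (u j ⁻¹' S) = q)
    (A : Finset ι) :
    μ {ω | ({j | u j ω ∈ S} : Finset ι) = A} = q ^ #A * (1 - q) ^ (Fintype.card ι - #A) := by
  have hcompl : ∀ j, μ (u j ⁻¹' Sᶜ) = 1 - q := fun j => by
    rw [Set.preimage_compl, prob_compl_eq_one_sub (hu j hS), hq]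
  rw [setOf_filter_mem_eq_iInter,
    hind.meas_iInter fun j => ⟨_, by split_ifs; exacts [hS, hS.compl], rfl⟩]
  simp only [apply_ite, hq, hcompl, Finset.prod_ite, Finset.prod_const]
  simp [Finset.filter_not, Finset.card_sdiff]

theorem ProbabilityTheory.iIndepFun.measure_card_filter_mem_eq (hu : ∀ j, Measurable (u j))
    (hind : iIndepFun u μ) (hS : MeasurableSet S) {q : ℝ≥0∞} (hq : ∀ j, μ (u j ⁻¹' S) = q)
    (m : ℕ) :
    μ {ω | #({j | u j ω ∈ S} : Finset ι) = m}
      = (Fintype.card ι).choose m * q ^ m * (1 - q) ^ (Fintype.card ι - m) := by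
  have hunion : {ω | #({j | u j ω ∈ S} : Finset ι) = m}
      = ⋃ A ∈ powersetCard m univ, {ω | ({j | u j ω ∈ S} : Finset ι) = A} := by
    ext ω
    simp
  have hmeas : ∀ A : Finset ι, MeasurableSet {ω | ({j | u j ω ∈ S} : Finset ι) = A} :=
    fun A => by
      rw [setOf_filter_mem_eq_iInter]
      exact .iInter fun j => hu j (by split_ifs; exacts [hS, hS.compl])
  rw [hunion, measure_biUnion_finset (fun A _ B _ hAB => Set.disjoint_left.2 fun ω hA hB =>
      hAB (hA.symm.trans hB)) fun A _ => hmeas A,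
    Finset.sum_congr rfl fun A hA => by
      rw [hind.measure_filter_mem_eq hu hS hq, (mem_powersetCard.1 hA).2]]
  simp [mul_assoc]

end CountingSamples

theorem Monotone.le_iff_lt_card_filter_le_of_perm {α : Type*} [LinearOrder α] {N : ℕ}
    {v u : Fin N → α} (hv : Monotone v) {σ : Equiv.Perm (Fin N)} (hσ : ∀ j, v j = u (σ j))
    (i : Fin N) (x : α) : v i ≤ x ↔ (i : ℕ) < #{j | u j ≤ x} := by
  have hcount : #{j | v j ≤ x} = #{j | u j ≤ x} := by
    simp_rw [hσ, Finset.card_filter]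
    exact Equiv.sum_comp σ fun j => if u j ≤ x then 1 else 0
  rw [← hcount]
  constructor
  · intro hi
    have hsub : Finset.Iic i ⊆ ({j | v j ≤ x} : Finset (Fin N)) := fun j hj =>
      Finset.mem_filter.2 ⟨Finset.mem_univ j, (hv (Finset.mem_Iic.1 hj)).trans hi⟩
    have := Finset.card_le_card hsub
    rw [Fin.card_Iic] at this
    omega
  · intro hcard
    by_contra! hi
    have hsub : ({j | v j ≤ x} : Finset (Fin N)) ⊆ Finset.Iio i := fun j hj =>
      Finset.mem_Iio.2 (hv.reflect_lt ((Finset.mem_filter.1 hj).2.trans_lt hi))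
    have := Finset.card_le_card hsub
    rw [Fin.card_Iio] at this
    omega

namespace IsUniformOrderStats

variable {Ω : Type*} [MeasurableSpace Ω] {μ : Measure Ω} {b : ℝ} {N : ℕ} {t : Fin N → Ω → ℝ}

theorem measurable (ht : IsUniformOrderStats μ b t) (i : Fin N) : Measurable (t i) := by
  obtain ⟨u, hu, -, -, hts⟩ := ht
  refine measurable_of_Iic fun x => ?_
  have hevent : t i ⁻¹' Set.Iic x = {ω | (i : ℕ) < #{j | u j ω ∈ Set.Iic x}} := by
    ext ω
    obtain ⟨hmono, _, hσ⟩ := hts ω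
    simp only [Set.mem_preimage, Set.mem_Iic, Set.mem_ofPred_eq]
    exact hmono.le_iff_lt_card_filter_le_of_perm (u := fun j => u j ω) hσ i x
  exact hevent ▸ measurable_card_filter_mem hu measurableSet_Iic measurableSet_Ioi

theorem ae_mem_Icc (ht : IsUniformOrderStats μ b t) (i : Fin N) :
    ∀ᵐ ω ∂μ, t i ω ∈ Set.Icc 0 b := by
  obtain ⟨u, hu, -, hmap, hts⟩ := ht
  have hu_mem : ∀ j, ∀ᵐ ω ∂μ, u j ω ∈ Set.Icc 0 b := fun j => by
    rw [ae_iff, show {ω | u j ω ∉ Set.Icc 0 b} = u j ⁻¹' (Set.Icc 0 b)ᶜ from rfl,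
      ← Measure.map_apply (hu j) measurableSet_Icc.compl, hmap j]
    simp [Measure.restrict_apply measurableSet_Icc.compl]
  filter_upwards [ae_all_iff.2 hu_mem] with ω hω
  obtain ⟨-, σ, hσ⟩ := hts ω
  exact hσ i ▸ hω (σ i)

theorem memLp [IsFiniteMeasure μ] (ht : IsUniformOrderStats μ b t) (i : Fin N) (q : ℝ≥0∞) :
    MemLp (t i) q μ :=
  MemLp.of_bound (ht.measurable i).aestronglyMeasurable |b| <| by
    filter_upwards [ht.ae_mem_Icc i] with ω h
    rw [Real.norm_eq_abs, abs_of_nonneg h.1]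
    exact h.2.trans (le_abs_self b)

variable [IsProbabilityMeasure μ]

theorem measureReal_lt (ht : IsUniformOrderStats μ 1 t) (i : Fin N) {x : ℝ}
    (hx : x ∈ Set.Icc 0 1) :
    μ.real {ω | x < t i ω} = ∑ m ∈ range (i + 1), N.choose m * x ^ m * (1 - x) ^ (N - m) := by
  obtain ⟨u, hu, hind, hmap, hts⟩ := ht
  have hmarginal : ∀ j, μ (u j ⁻¹' Set.Iic x) = ENNReal.ofReal x := fun j => by
    rw [← Measure.map_apply (hu j) measurableSet_Iic, hmap j, Measure.smul_apply,
      Measure.restrict_apply measurableSet_Iic,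
      show Set.Iic x ∩ Set.Icc 0 1 = Set.Icc 0 x by ext; simp; grind, Real.volume_Icc]
    simp
  have hevent : {ω | x < t i ω}
      = ⋃ m ∈ range (i + 1), {ω | #({j | u j ω ∈ Set.Iic x} : Finset (Fin N)) = m} := by
    ext ω
    obtain ⟨hmono, _, hσ⟩ := hts ω
    simp only [Set.mem_ofPred_eq, Set.mem_iUnion, Finset.mem_range, exists_prop,
      exists_eq_right', Set.mem_Iic]
    rw [← not_le, hmono.le_iff_lt_card_filter_le_of_perm (u := fun j => u j ω) hσ, not_lt,
      Nat.lt_add_one_iff]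
  have hdisj : Set.PairwiseDisjoint (Finset.range (i + 1) : Set ℕ)
      fun m => {ω | #({j | u j ω ∈ Set.Iic x} : Finset (Fin N)) = m} :=
    fun m _ m' _ hm => Set.disjoint_left.2 fun ω h h' => hm (h.symm.trans h')
  rw [measureReal_def, hevent, measure_biUnion_finset hdisj fun m _ =>
      measurable_card_filter_mem hu measurableSet_Iic (measurableSet_singleton m),
    ENNReal.toReal_sum fun m _ => by finiteness]
  refine Finset.sum_congr rfl fun m _ => ?_
  rw [hind.measure_card_filter_mem_eq hu measurableSet_Iic hmarginal, Fintype.card_fin,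
    ← ENNReal.ofReal_one, ← ENNReal.ofReal_sub _ hx.1]
  simp [ENNReal.toReal_ofReal hx.1, ENNReal.toReal_ofReal (sub_nonneg.2 hx.2)]

theorem integral_pow_succ (ht : IsUniformOrderStats μ 1 t) (i : Fin N) (n : ℕ) :
    ∫ ω, t i ω ^ (n + 1) ∂μ = ∑ m ∈ range (i + 1),
      ∫ x in (0:ℝ)..1, (n + 1) * x ^ n * (N.choose m * x ^ m * (1 - x) ^ (N - m)) := by
  rw [integral_pow_succ_eq_intervalIntegral_measureReal_lt (ht.measurable i) (ht.ae_mem_Icc i),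
    ← intervalIntegral.integral_finsetSum fun m _ => by
      apply Continuous.intervalIntegrable; fun_prop]
  refine intervalIntegral.integral_congr fun x hx => ?_
  rw [Set.uIcc_of_le zero_le_one] at hx
  simp only [ht.measureReal_lt i hx, Finset.mul_sum]

theorem integral_eq (ht : IsUniformOrderStats μ 1 t) (i : Fin N) :
    ∫ ω, t i ω ∂μ = (i + 1) / (N + 1) := by
  have h := ht.integral_pow_succ i 0
  simp only [zero_add, pow_one, pow_zero, CharP.cast_eq_zero, one_mul, mul_one] at h
  rw [h, Finset.sum_congr rfl fun m hm => integral_choose_mul_pow_mul_one_sub_pow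
    (by have := Finset.mem_range.1 hm; omega)]
  simp [div_eq_mul_inv]

theorem integral_sq (ht : IsUniformOrderStats μ 1 t) (i : Fin N) :
    ∫ ω, t i ω ^ 2 ∂μ = (i + 1) * (i + 2) / ((N + 1) * (N + 2)) := by
  have hterm : ∀ m ∈ range (i + 1), ∫ x in (0:ℝ)..1,
      ((1 : ℕ) + 1 : ℝ) * x ^ 1 * (N.choose m * x ^ m * (1 - x) ^ (N - m))
        = 2 * ((m : ℝ) + 1) / ((N + 1) * (N + 2)) := fun m hm => by
    have hmN : m + 1 ≤ N + 1 := by have := Finset.mem_range.1 hm; omega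
    simp_rw [pow_one, mul_assoc _ _ (_ * _), mul_choose_mul_pow_mul_one_sub_pow]
    rw [intervalIntegral.integral_const_mul, intervalIntegral.integral_const_mul,
      integral_choose_mul_pow_mul_one_sub_pow hmN]
    push_cast
    field_simp
    ring
  have hsum : ∀ k : ℕ, ∑ m ∈ range k, 2 * ((m : ℝ) + 1) = k * (k + 1) := fun k => by
    induction k with
    | zero => simp
    | succ k ih => rw [Finset.sum_range_succ, ih]; push_cast; ring
  rw [ht.integral_pow_succ i 1, Finset.sum_congr rfl hterm, ← Finset.sum_div, hsum]
  push_cast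
  ring

theorem integral_sub_sq_le (ht : IsUniformOrderStats μ 1 t) (i : Fin N) :
    ∫ ω, (t i ω - (i + 1) / N) ^ 2 ∂μ ≤ 1 / (4 * N) + 1 / (N * √N) := by
  rw [integral_sub_const_sq (ht.memLp i 2), ht.integral_sq, ht.integral_eq]
  set k : ℝ := (i : ℝ) + 1
  set n : ℝ := (N : ℝ)
  have hk : 1 ≤ k := by simp [k]
  have hkn : k ≤ n := by simp only [k, n]; exact_mod_cast i.isLt
  have hn : 0 < n := by linarith
  have hsqrt : √n ≤ n := by
    simpa [Real.sqrt_sq hn.le] using Real.sqrt_le_sqrt (by nlinarith : n ≤ n ^ 2)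
  have hdecomp : k * (k + 1) / ((n + 1) * (n + 2)) - 2 * (k / n) * (k / (n + 1)) + (k / n) ^ 2
      = k * (n + 1 - k) / ((n + 1) ^ 2 * (n + 2)) + k ^ 2 / (n ^ 2 * (n + 1) ^ 2) := by
    field_simp
    ring
  have hvariance : k * (n + 1 - k) / ((n + 1) ^ 2 * (n + 2)) ≤ 1 / (4 * n) := by
    rw [div_le_div_iff₀ (by positivity) (by positivity)]
    nlinarith [sq_nonneg (n + 1 - 2 * k)]
  have hbias : k ^ 2 / (n ^ 2 * (n + 1) ^ 2) ≤ 1 / (n * √n) := calc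
    k ^ 2 / (n ^ 2 * (n + 1) ^ 2) ≤ n ^ 2 / (n ^ 2 * (n + 1) ^ 2) := by gcongr
    _ = 1 / (n + 1) ^ 2 := by field_simp
    _ ≤ 1 / (n * √n) := one_div_le_one_div_of_le (by positivity) (by nlinarith)
  rw [show ((i : ℕ) : ℝ) + 2 = k + 1 by simp only [k]; ring, hdecomp]
  exact add_le_add hvariance hbias

end IsUniformOrderStats

/-- There is an absolute constant `C` such that, for any 1-periodic
differentiable `p` with `‖p'‖_∞ ≤ L`, every `N`, and every `i ∈ {1, …, N}`,
`E[|p(t_i) − p(i/N)|²] ≤ L² (1/(4N) + C/(N√N))`. -/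
theorem smooth_function_order_stat_bound :
    ∃ C : ℝ, ∀ (p : ℝ → ℂ) (L : ℝ) (N : ℕ) (Ω : Type) [MeasurableSpace Ω]
      (μ : Measure Ω) [IsProbabilityMeasure μ] (t : Fin N → Ω → ℝ) (i : Fin N),
      Function.Periodic p 1 →
      Differentiable ℝ p →
      (∀ x : ℝ, ‖deriv p x‖ ≤ L) →
      IsUniformOrderStats μ 1 t →
      (∫ ω, ‖p (t i ω) - p (((i.1 : ℝ) + 1) / N)‖ ^ 2 ∂μ)
        ≤ L ^ 2 * (1 / (4 * N) + C / (N * Real.sqrt N)) := by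
  refine ⟨1, fun p L N Ω _ μ _ t i _ hp hL ht => ?_⟩
  have hsq : Integrable (fun ω => (t i ω - ((i : ℝ) + 1) / N) ^ 2) μ :=
    ((ht.memLp i 2).sub (memLp_const _)).integrable_sq
  calc ∫ ω, ‖p (t i ω) - p (((i : ℝ) + 1) / N)‖ ^ 2 ∂μ
      ≤ L ^ 2 * ∫ ω, (t i ω - ((i : ℝ) + 1) / N) ^ 2 ∂μ :=
        integral_norm_sub_sq_le_of_norm_deriv_le hp hL hsq
    _ ≤ L ^ 2 * (1 / (4 * N) + 1 / (N * √N)) :=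
        mul_le_mul_of_nonneg_left (ht.integral_sub_sq_le i) (sq_nonneg L)
end
end
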